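/- arXiv:0809.2947 — 2 statements merged into one kernel-verified Lean document; each statement's English description precedes it below -/
import Mathlib

section
/- An integral domain D is a ∗-CICD if and only if (A^∗ : B) = (AB⁻¹)^∗ for all nonzero fractional ideals A, B of D. -/
/-!
The key inequality is `A^∗ B ⊆ (AB)^∗`, obtained elementwise from `b A^∗ = (bA)^∗`; with
idempotence it gives `(A^∗ B)^∗ = (AB)^∗`. The inclusion `(AB⁻¹)^∗ ⊆ (A^∗ : B)` then always
holds, since `(AB⁻¹)^∗ B ⊆ (AB⁻¹B)^∗ ⊆ A^∗`. If `(BB⁻¹)^∗ = D`, then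
`C = (A^∗ : B)` satisfies `C = (BB⁻¹)^∗ C ⊆ (CBB⁻¹)^∗ ⊆ (A^∗B⁻¹)^∗ = (AB⁻¹)^∗`.
Conversely, taking `A = B` gives `(AA⁻¹)^∗ = (A^∗ : A) ⊇ D`, while `AA⁻¹ ⊆ D` gives `⊆`.
-/

open FractionalIdeal

/-- A star operation on an integral domain `D` with fraction field `K`, acting on
fractional ideals: it fixes `D`, is extensive, monotone, idempotent (all on nonzero
ideals), and commutes with multiplication by nonzero principal fractional ideals. -/
structure StarOp (D : Type*) [CommRing D] [IsDomain D] (K : Type*) [Field K]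
    [Algebra D K] [IsFractionRing D K] where
  star : FractionalIdeal (nonZeroDivisors D) K → FractionalIdeal (nonZeroDivisors D) K
  star_one : star 1 = 1
  le_star : ∀ {A}, A ≠ 0 → A ≤ star A
  star_mono : ∀ {A B}, A ≠ 0 → A ≤ B → star A ≤ star B
  star_idem : ∀ {A}, A ≠ 0 → star (star A) = star A
  star_smul : ∀ {A : FractionalIdeal (nonZeroDivisors D) K} (x : K), x ≠ 0 → A ≠ 0 →
    star (spanSingleton (nonZeroDivisors D) x * A) = spanSingleton (nonZeroDivisors D) x * star A

variable {D K : Type*} [CommRing D] [IsDomain D] [Field K] [Algebra D K] [IsFractionRing D K]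

namespace FractionalIdeal

instance : NoZeroDivisors (FractionalIdeal (nonZeroDivisors D) K) where
  eq_zero_or_eq_zero_of_mul_eq_zero {A B} hAB := by
    by_contra! h
    obtain ⟨a, ha, ha0⟩ : ∃ a ∈ A, a ≠ 0 := by simpa [eq_zero_iff] using h.1
    obtain ⟨b, hb, hb0⟩ : ∃ b ∈ B, b ≠ 0 := by simpa [eq_zero_iff] using h.2
    exact mul_ne_zero ha0 hb0 ((mem_zero_iff _).1 (hAB ▸ mul_mem_mul ha hb))

theorem inv_ne_zero_of_ne_zero {A : FractionalIdeal (nonZeroDivisors D) K} (hA : A ≠ 0) :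
    A⁻¹ ≠ 0 := by
  obtain ⟨a, ha, hAa⟩ := A.isFractional
  have ha_mem : algebraMap D K a ∈ A⁻¹ := (mem_inv_iff hA).2 fun x hx => by
    obtain ⟨r, hr⟩ := hAa x hx
    exact (mem_one_iff _).2 ⟨r, hr.trans (Algebra.smul_def a x)⟩
  have ha0 : algebraMap D K a ≠ 0 :=
    IsFractionRing.to_map_ne_zero_of_mem_nonZeroDivisors ha
  exact fun h => ha0 ((mem_zero_iff _).1 (h ▸ ha_mem))

end FractionalIdeal

namespace StarOp

variable (s : StarOp D K) {A B : FractionalIdeal (nonZeroDivisors D) K}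

theorem star_ne_zero (hA : A ≠ 0) : s.star A ≠ 0 :=
  fun h => hA (FractionalIdeal.le_zero_iff.1 (h ▸ s.le_star hA))

theorem star_le_one (hA : A ≠ 0) (hA1 : A ≤ 1) : s.star A ≤ 1 :=
  s.star_one ▸ s.star_mono hA hA1

theorem star_mul_le_star_mul (hA : A ≠ 0) : s.star A * B ≤ s.star (A * B) := by
  rw [mul_comm]
  refine mul_le.2 fun b hb a ha => ?_
  rcases eq_or_ne b 0 with rfl | hb0
  · simpa using zero_mem (s.star (A * B))
  have hbA : b * a ∈ s.star (spanSingleton _ b * A) := by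
    rw [s.star_smul b hb0 hA, mem_singleton_mul]
    exact ⟨a, ha, rfl⟩
  have hbA_le : spanSingleton _ b * A ≤ A * B := by
    rw [mul_comm]
    exact mul_le_mul_right (spanSingleton_le_iff_mem.2 hb) A
  exact s.star_mono (mul_ne_zero (spanSingleton_ne_zero_iff.2 hb0) hA) hbA_le hbA

theorem star_star_mul (hA : A ≠ 0) (hB : B ≠ 0) : s.star (s.star A * B) = s.star (A * B) := by
  apply le_antisymm
  · simpa only [s.star_idem (mul_ne_zero hA hB)] using
      s.star_mono (mul_ne_zero (s.star_ne_zero hA) hB) (s.star_mul_le_star_mul (B := B) hA)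
  · exact s.star_mono (mul_ne_zero hA hB) (mul_le_mul_left (s.le_star hA) B)

theorem star_mul_inv_le_star_div (hA : A ≠ 0) (hB : B ≠ 0) :
    s.star (A * B⁻¹) ≤ s.star A / B := by
  have hAB : A * B⁻¹ ≠ 0 := mul_ne_zero hA (inv_ne_zero_of_ne_zero hB)
  rw [le_div_iff_mul_le hB]
  calc s.star (A * B⁻¹) * B ≤ s.star (A * B⁻¹ * B) := s.star_mul_le_star_mul hAB
    _ ≤ s.star A := s.star_mono (mul_ne_zero hAB hB) <| by
        rw [mul_assoc, mul_comm B⁻¹]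
        exact mul_le_of_le_one_right' mul_one_div_le_one

theorem star_div_le_star_mul_inv (hA : A ≠ 0) (hB : B ≠ 0) (hBB : s.star (B * B⁻¹) = 1) :
    s.star A / B ≤ s.star (A * B⁻¹) := by
  set C := s.star A / B
  have hBinv : B⁻¹ ≠ 0 := inv_ne_zero_of_ne_zero hB
  rcases eq_or_ne C 0 with hC | hC
  · exact hC ▸ zero_le _
  calc C = s.star (B * B⁻¹) * C := by rw [hBB, one_mul]
    _ ≤ s.star (B * B⁻¹ * C) := s.star_mul_le_star_mul (mul_ne_zero hB hBinv)
    _ = s.star (C * B * B⁻¹) := by ring_nf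
    _ ≤ s.star (s.star A * B⁻¹) := s.star_mono (mul_ne_zero (mul_ne_zero hC hB) hBinv) <|
        mul_le_mul_left ((le_div_iff_mul_le hB).1 le_rfl) B⁻¹
    _ = s.star (A * B⁻¹) := s.star_star_mul hA hBinv

end StarOp

/-- `D` is a `∗`-CICD iff `(A^∗ : B) = (AB⁻¹)^∗` for all nonzero fractional
ideals `A`, `B`. -/
theorem starCICD_iff_colon_eq (s : StarOp D K) :
    (∀ A : FractionalIdeal (nonZeroDivisors D) K, A ≠ 0 → s.star (A * A⁻¹) = 1) ↔
    (∀ A B : FractionalIdeal (nonZeroDivisors D) K, A ≠ 0 → B ≠ 0 → s.star A / B = s.star (A * B⁻¹)) := by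
  constructor
  · intro hCICD A B hA hB
    exact le_antisymm (s.star_div_le_star_mul_inv hA hB (hCICD B hB))
      (s.star_mul_inv_le_star_div hA hB)
  · intro hcolon A hA
    apply le_antisymm (s.star_le_one (mul_ne_zero hA (inv_ne_zero_of_ne_zero hA)) mul_one_div_le_one)
    rw [← hcolon A A hA hA, le_div_iff_mul_le hA, one_mul]
    exact s.le_star hA
end

section
/- For a star operation ∗ of finite character, an integral domain D in which A⁻¹ is ∗-invertible for all nonzero fractional ideals A satisfies (AB)⁻¹ = (A⁻¹B⁻¹)^∗ for all nonzero fractional ideals A, B, and conversely. -/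
/-! Writing `X_v = (X⁻¹)⁻¹`, every star operation satisfies `X * Y^∗ ≤ (X * Y)^∗` (from
`star_smul`, one element of `X` at a time), hence `X^∗ ≤ X_v`, so divisorial ideals such as
`(A * B)⁻¹` are `∗`-closed.

If `(B⁻¹ * B_v)^∗ = 1`, then `(A * B)⁻¹ = (A * B)⁻¹ * (B⁻¹ * B_v)^∗ ≤ ((A * B)⁻¹ * B_v * B⁻¹)^∗`,
and `(A * B)⁻¹ * B_v ≤ A⁻¹`; the other inclusion holds because `A⁻¹ * B⁻¹ ≤ (A * B)⁻¹` and the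
latter is `∗`-closed. Conversely, taking `B = A⁻¹` gives `(A⁻¹ * A_v)^∗ = (A * A⁻¹)⁻¹ ≥ 1`,
while `A⁻¹ * A_v ≤ 1`. -/

open FractionalIdeal

variable {D K : Type*} [CommRing D] [IsDomain D] [Field K] [Algebra D K] [IsFractionRing D K]

namespace FractionalIdeal

instance {R P : Type*} [CommRing R] [CommRing P] [NoZeroDivisors P] [Algebra R P]
    {S : Submonoid R} :
    NoZeroDivisors (FractionalIdeal S P) :=
  coeToSubmodule_injective.noZeroDivisors _ coe_zero coe_mul

protected theorem inv_ne_zero {I : FractionalIdeal (nonZeroDivisors D) K} (hI : I ≠ 0) :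
    I⁻¹ ≠ 0 := by
  obtain ⟨a, ha, haI⟩ := I.isFractional
  have ha_mem : algebraMap D K a ∈ I⁻¹ := by
    rw [mem_inv_iff hI]
    intro y hy
    obtain ⟨c, hc⟩ := haI y hy
    exact (mem_one_iff _).mpr ⟨c, by rw [hc, Algebra.smul_def]⟩
  intro h
  rw [h, mem_zero_iff, IsFractionRing.to_map_eq_zero_iff] at ha_mem
  exact nonZeroDivisors.ne_zero ha ha_mem

protected theorem mul_inv_le_one (I : FractionalIdeal (nonZeroDivisors D) K) : I * I⁻¹ ≤ 1 :=
  mul_one_div_le_one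

theorem one_le_inv_of_le_one {I : FractionalIdeal (nonZeroDivisors D) K} (hI : I ≠ 0)
    (h : I ≤ 1) : 1 ≤ I⁻¹ := by
  simpa only [inv_one] using inv_anti_mono hI one_ne_zero h

theorem le_inv_inv (I : FractionalIdeal (nonZeroDivisors D) K) : I ≤ (I⁻¹)⁻¹ := by
  rcases eq_or_ne I 0 with rfl | hI
  · exact zero_le _
  · rw [inv_eq, le_div_iff_mul_le (FractionalIdeal.inv_ne_zero hI)]
    exact FractionalIdeal.mul_inv_le_one I

theorem inv_inv_inv (I : FractionalIdeal (nonZeroDivisors D) K) : ((I⁻¹)⁻¹)⁻¹ = I⁻¹ := by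
  rcases eq_or_ne I 0 with rfl | hI
  · simp only [inv_zero']
  · have hI' := FractionalIdeal.inv_ne_zero hI
    exact le_antisymm (inv_anti_mono hI (FractionalIdeal.inv_ne_zero hI') (le_inv_inv I))
      (le_inv_inv I⁻¹)

theorem inv_mul_inv_le_mul_inv (I J : FractionalIdeal (nonZeroDivisors D) K) :
    I⁻¹ * J⁻¹ ≤ (I * J)⁻¹ := by
  rcases eq_or_ne (I * J) 0 with hIJ | hIJ
  · rcases mul_eq_zero.mp hIJ with rfl | rfl <;> simp only [inv_zero', zero_mul, mul_zero, le_refl]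
  · rw [inv_eq (I := I * J), le_div_iff_mul_le hIJ]
    calc I⁻¹ * J⁻¹ * (I * J) = (I * I⁻¹) * (J * J⁻¹) := by ring
      _ ≤ 1 * 1 := mul_le_mul' (FractionalIdeal.mul_inv_le_one I) (FractionalIdeal.mul_inv_le_one J)
      _ = 1 := one_mul 1

theorem mul_inv_mul_le_inv {I : FractionalIdeal (nonZeroDivisors D) K} (hI : I ≠ 0)
    (J : FractionalIdeal (nonZeroDivisors D) K) : (I * J)⁻¹ * J ≤ I⁻¹ := by
  rw [inv_eq (I := I), le_div_iff_mul_le hI]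
  calc (I * J)⁻¹ * J * I = (I * J) * (I * J)⁻¹ := by ring
    _ ≤ 1 := FractionalIdeal.mul_inv_le_one _

theorem mul_inv_mul_inv_inv_le_inv {I J : FractionalIdeal (nonZeroDivisors D) K} (hI : I ≠ 0)
    (hJ : J ≠ 0) : (I * J)⁻¹ * (J⁻¹)⁻¹ ≤ I⁻¹ := by
  rw [inv_eq (I := I), le_div_iff_mul_le hI]
  calc (I * J)⁻¹ * (J⁻¹)⁻¹ * I = ((J * I)⁻¹ * I) * (J⁻¹)⁻¹ := by rw [mul_comm J I]; ring
    _ ≤ J⁻¹ * (J⁻¹)⁻¹ := mul_le_mul_left (mul_inv_mul_le_inv hJ I) _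
    _ ≤ 1 := FractionalIdeal.mul_inv_le_one _

end FractionalIdeal

namespace StarOp

variable (s : StarOp D K)

theorem mul_star_le_star_mul (X : FractionalIdeal (nonZeroDivisors D) K)
    {Y : FractionalIdeal (nonZeroDivisors D) K} (hY : Y ≠ 0) :
    X * s.star Y ≤ s.star (X * Y) := by
  refine mul_le.mpr fun x hx y hy => ?_
  rcases eq_or_ne x 0 with rfl | hx0
  · rw [zero_mul]
    exact zero_mem _
  have hxY : spanSingleton (nonZeroDivisors D) x * Y ≤ X * Y :=
    mul_le_mul_left (spanSingleton_le_iff_mem.mpr hx) Y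
  have hxy : x * y ∈ s.star (spanSingleton (nonZeroDivisors D) x * Y) := by
    rw [s.star_smul x hx0 hY]
    exact mul_mem_mul (mem_spanSingleton_self _ x) hy
  exact s.star_mono (mul_ne_zero (spanSingleton_ne_zero_iff.mpr hx0) hY) hxY hxy

theorem star_le_one_s8 {X : FractionalIdeal (nonZeroDivisors D) K} (hX : X ≠ 0) (h : X ≤ 1) :
    s.star X ≤ 1 :=
  s.star_one ▸ s.star_mono hX h

theorem star_le_inv_inv {X : FractionalIdeal (nonZeroDivisors D) K} (hX : X ≠ 0) :
    s.star X ≤ (X⁻¹)⁻¹ := by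
  have hX' := FractionalIdeal.inv_ne_zero hX
  rw [inv_eq (I := X⁻¹), le_div_iff_mul_le hX', mul_comm]
  calc X⁻¹ * s.star X ≤ s.star (X⁻¹ * X) := s.mul_star_le_star_mul _ hX
    _ ≤ 1 := s.star_le_one_s8 (mul_ne_zero hX' hX) (mul_comm X _ ▸ FractionalIdeal.mul_inv_le_one X)

theorem star_inv {X : FractionalIdeal (nonZeroDivisors D) K} (hX : X ≠ 0) :
    s.star X⁻¹ = X⁻¹ :=
  le_antisymm ((s.star_le_inv_inv (FractionalIdeal.inv_ne_zero hX)).trans (inv_inv_inv X).le)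
    (s.le_star (FractionalIdeal.inv_ne_zero hX))

end StarOp

theorem inv_starInvertible_iff_inv_mul_general (s : StarOp D K) :
    (∀ A : FractionalIdeal (nonZeroDivisors D) K, A ≠ 0 → s.star (A⁻¹ * (A⁻¹)⁻¹) = 1) ↔
    (∀ A B : FractionalIdeal (nonZeroDivisors D) K, A ≠ 0 → B ≠ 0 → (A * B)⁻¹ = s.star (A⁻¹ * B⁻¹)) := by
  constructor
  · intro h A B hA hB
    have hB' := FractionalIdeal.inv_ne_zero hB
    have hBv := mul_ne_zero hB' (FractionalIdeal.inv_ne_zero hB')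
    have hAB' := FractionalIdeal.inv_ne_zero (mul_ne_zero hA hB)
    refine le_antisymm ?_ ?_
    · calc (A * B)⁻¹ = (A * B)⁻¹ * s.star (B⁻¹ * (B⁻¹)⁻¹) := by rw [h B hB, mul_one]
        _ ≤ s.star ((A * B)⁻¹ * (B⁻¹ * (B⁻¹)⁻¹)) := s.mul_star_le_star_mul _ hBv
        _ ≤ s.star (A⁻¹ * B⁻¹) := s.star_mono (mul_ne_zero hAB' hBv) <| by
          rw [mul_left_comm, mul_comm]
          exact mul_le_mul_left (mul_inv_mul_inv_inv_le_inv hA hB) _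
    · calc s.star (A⁻¹ * B⁻¹) ≤ s.star (A * B)⁻¹ := s.star_mono
            (mul_ne_zero (FractionalIdeal.inv_ne_zero hA) hB') (inv_mul_inv_le_mul_inv A B)
        _ = (A * B)⁻¹ := s.star_inv (mul_ne_zero hA hB)
  · intro h A hA
    have hA' := FractionalIdeal.inv_ne_zero hA
    refine le_antisymm (s.star_le_one_s8 (mul_ne_zero hA' (FractionalIdeal.inv_ne_zero hA'))
      (FractionalIdeal.mul_inv_le_one A⁻¹)) ?_
    rw [← h A A⁻¹ hA hA']
    exact one_le_inv_of_le_one (mul_ne_zero hA hA') (FractionalIdeal.mul_inv_le_one A)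

/-- For a star operation `∗` of finite character, `A⁻¹` is `∗`-invertible for all
nonzero fractional ideals `A` iff `(AB)⁻¹ = (A⁻¹B⁻¹)^∗` for all nonzero fractional
ideals `A`, `B`. -/
theorem inv_starInvertible_iff_inv_mul (s : StarOp D K)
    (hfc : ∀ (A : FractionalIdeal (nonZeroDivisors D) K), A ≠ 0 → ∀ x ∈ s.star A,
      ∃ F : FractionalIdeal (nonZeroDivisors D) K, F ≠ 0 ∧ (F : Submodule D K).FG ∧ F ≤ A ∧ x ∈ s.star F) :
    (∀ A : FractionalIdeal (nonZeroDivisors D) K, A ≠ 0 → s.star (A⁻¹ * (A⁻¹)⁻¹) = 1) ↔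
    (∀ A B : FractionalIdeal (nonZeroDivisors D) K, A ≠ 0 → B ≠ 0 → (A * B)⁻¹ = s.star (A⁻¹ * B⁻¹)) :=
  inv_starInvertible_iff_inv_mul_general s
end
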